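/- arXiv:1312.2765 — 2 statements merged into one kernel-verified Lean document; each statement's English description precedes it below -/
import Mathlib

section
/- For every integer N ≥ 0, (1/√2)·(1 + 2/(4N+5))^{N + 7/4}·√(N + 5/4) ≤ √((e/2)·(N + 3/2)). -/
/-!
Squaring both sides and writing `t = 4N + 5`, the claim becomes
`(1 + 2/t) ^ ((t + 2)/2) ≤ e · (1 + 1/t)`. Taking logarithms, this follows from the Padé-type
bounds `2x/(x + 2) ≤ log (1 + x) ≤ x(6 + x)/(6 + 4x)` for `x ≥ 0`, applied at `x = 1/t` and
`x = 2/t`: what remains is a rational inequality that, after clearing denominators, is `t ≥ 2`.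
-/

open Real

namespace Real

lemma log_one_add_le_of_nonneg {x : ℝ} (hx : 0 ≤ x) :
    log (1 + x) ≤ x * (6 + x) / (6 + 4 * x) := by
  let gap : ℝ → ℝ := fun y ↦ y * (6 + y) / (6 + 4 * y) - log (1 + y)
  have hgap : ∀ y, 0 ≤ y → HasDerivAt gap (y ^ 3 / ((3 + 2 * y) ^ 2 * (1 + y))) y := by
    intro y hy
    have hquot := ((hasDerivAt_id' y).mul ((hasDerivAt_id' y).const_add 6)).div
      (((hasDerivAt_id' y).const_mul 4).const_add 6) (by positivity)
    have hlog := ((hasDerivAt_id' y).const_add 1).log (by positivity)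
    refine (hquot.sub hlog).congr_deriv ?_
    simp only [Pi.mul_apply]
    field_simp
    ring
  have hmono : MonotoneOn gap (Set.Ici 0) := by
    refine monotoneOn_of_hasDerivWithinAt_nonneg (convex_Ici 0)
      (fun y hy ↦ (hgap y hy).continuousAt.continuousWithinAt)
      (fun y hy ↦ (hgap y (le_of_lt (by simpa using hy))).hasDerivWithinAt) ?_
    intro y hy
    rw [interior_Ici] at hy
    have : 0 < y := hy
    positivity
  simpa [gap] using hmono Set.self_mem_Ici hx hx

end Real

lemma one_add_two_div_rpow_le {t : ℝ} (ht : 2 ≤ t) :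
    (1 + 2 / t) ^ ((t + 2) / 2) ≤ exp 1 * (1 + 1 / t) := by
  have ht0 : 0 < t := by linarith
  rw [← log_le_log_iff (by positivity) (by positivity), log_rpow (by positivity),
    log_mul (exp_pos 1).ne' (by positivity), log_exp]
  have hupper := log_one_add_le_of_nonneg (x := 2 / t) (by positivity)
  have hlower := le_log_one_add_of_nonneg (x := 1 / t) (by positivity)
  have hrational : (t + 2) / 2 * (2 / t * (6 + 2 / t) / (6 + 4 * (2 / t))) ≤
      1 + 2 * (1 / t) / (1 / t + 2) := by
    field_simp
    nlinarith
  calc (t + 2) / 2 * log (1 + 2 / t)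
      ≤ (t + 2) / 2 * (2 / t * (6 + 2 / t) / (6 + 4 * (2 / t))) := by gcongr
    _ ≤ 1 + 2 * (1 / t) / (1 / t + 2) := hrational
    _ ≤ 1 + log (1 + 1 / t) := by gcongr

theorem stmt_8 (N : ℕ) :
    (1 / Real.sqrt 2) * (1 + 2 / (4 * (N : ℝ) + 5)) ^ ((N : ℝ) + 7 / 4) *
      Real.sqrt ((N : ℝ) + 5 / 4) ≤
    Real.sqrt ((Real.exp 1 / 2) * ((N : ℝ) + 3 / 2)) := by
  set t : ℝ := 4 * N + 5 with ht
  have ht2 : 2 ≤ t := by linarith [(N.cast_nonneg : (0 : ℝ) ≤ N)]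
  have hpow : (1 + 2 / t) ^ ((N : ℝ) + 7 / 4) = √((1 + 2 / t) ^ ((t + 2) / 2)) := by
    rw [sqrt_eq_rpow, ← rpow_mul (by positivity), ht]
    ring_nf
  rw [hpow, one_div, ← sqrt_inv, ← sqrt_mul (by positivity), ← sqrt_mul (by positivity)]
  apply sqrt_le_sqrt
  calc 2⁻¹ * (1 + 2 / t) ^ ((t + 2) / 2) * (N + 5 / 4)
      = (1 + 2 / t) ^ ((t + 2) / 2) * (t / 8) := by rw [ht]; ring
    _ ≤ exp 1 * (1 + 1 / t) * (t / 8) :=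
      mul_le_mul_of_nonneg_right (one_add_two_div_rpow_le ht2) (by positivity)
    _ = exp 1 / 2 * (N + 3 / 2) := by rw [ht]; field_simp; ring
end

section
/- The function φ ↦ csc(2(π/2 - φ)) · (cos φ)^{-2N - 3/2} on (0, π/4), for a fixed integer N ≥ 0, attains its minimum at φ* = arctan((2/(4N+5))^{1/2}); i.e. for all φ ∈ (0, π/4), csc(2(π/2 - φ))·(cos φ)^{-2N-3/2} ≥ csc(2(π/2 - φ*))·(cos φ*)^{-2N-3/2}. -/
open Real

lemma key_ineq {c u : ℝ} (hc : 1 < c) (hu : 0 < u) :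
    (1 + 1/(c-1)) ^ c / (1/(c-1)) ≤ (1 + u) ^ c / u := by
  set u' : ℝ := 1/(c-1) with hu'def
  have hc0 : 0 < c - 1 := by linarith
  have hu'0 : 0 < u' := by positivity
  have h1u' : 0 < 1 + u' := by linarith
  have h1u : 0 < 1 + u := by linarith
  have hs : -1 ≤ (u - u')/(1+u') := by
    rw [le_div_iff₀ h1u']
    nlinarith
  have hb := one_add_mul_self_le_rpow_one_add hs hc.le
  have h1 : (1:ℝ) + (u-u')/(1+u') = (1+u)/(1+u') := by field_simp; ring
  have h2 : 1 + c * ((u-u')/(1+u')) = u/u' := by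
    rw [hu'def]
    field_simp
    ring
  rw [h1, h2, Real.div_rpow h1u.le h1u'.le, le_div_iff₀ (rpow_pos_of_pos h1u' c)] at hb
  rw [div_le_div_iff₀ hu'0 hu]
  calc (1+u')^c * u = (u/u' * (1+u')^c) * u' := by field_simp
    _ ≤ (1+u)^c * u' := by
        have := mul_le_mul_of_nonneg_right hb hu'0.le
        linarith

lemma fsq (N : ℕ) {φ : ℝ} (h1 : 0 < φ) (h2 : φ < Real.pi/2) :
    ((Real.sin (2*(Real.pi/2-φ)))⁻¹ * (Real.cos φ) ^ (-(2*(N:ℝ)+3/2)))^2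
      = (1 + Real.tan φ ^ 2) ^ (2*(N:ℝ)+7/2) / (4 * Real.tan φ ^ 2) := by
  have hc : 0 < Real.cos φ := Real.cos_pos_of_mem_Ioo ⟨by linarith [Real.pi_pos], h2⟩
  have hs : 0 < Real.sin φ := Real.sin_pos_of_pos_of_lt_pi h1 (by linarith [Real.pi_pos])
  have e1 : 2*(Real.pi/2-φ) = Real.pi - 2*φ := by ring
  rw [e1, Real.sin_pi_sub, Real.sin_two_mul, Real.tan_eq_sin_div_cos]
  have e2 : 1 + (Real.sin φ / Real.cos φ)^2 = (Real.cos φ ^ 2)⁻¹ := by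
    field_simp
    linarith [Real.sin_sq_add_cos_sq φ]
  have e3 : ((Real.cos φ ^ 2)⁻¹ : ℝ) = Real.cos φ ^ (-2 : ℝ) := by
    rw [← Real.rpow_natCast (Real.cos φ) 2, ← Real.rpow_neg hc.le]
    norm_num
  rw [e2, e3, mul_pow, ← Real.rpow_natCast (Real.cos φ ^ (-(2*(N:ℝ)+3/2))) 2,
    ← Real.rpow_mul hc.le, ← Real.rpow_mul hc.le]
  rw [show (-2 * (2*(N:ℝ)+7/2)) = (-(2*(N:ℝ)+3/2))*(2:ℕ) + (-2) + (-2) by push_cast; ring,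
    Real.rpow_add hc, Real.rpow_add hc, ← e3]
  field_simp
  ring

theorem stmt_17 (N : ℕ) (φ : ℝ) (hφ₁ : 0 < φ) (hφ₂ : φ < Real.pi / 4) :
    (Real.sin (2 * (Real.pi / 2 - Real.arctan (Real.sqrt (2 / (4 * N + 5))))))⁻¹ *
      (Real.cos (Real.arctan (Real.sqrt (2 / (4 * N + 5))))) ^ (-(2 * (N : ℝ) + 3 / 2)) ≤
    (Real.sin (2 * (Real.pi / 2 - φ)))⁻¹ * (Real.cos φ) ^ (-(2 * (N : ℝ) + 3 / 2)) := by
  have hpi := Real.pi_pos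
  have hden : (0:ℝ) < 4 * (N:ℝ) + 5 := by positivity
  set x : ℝ := Real.sqrt (2 / (4 * N + 5)) with hxdef
  have hx : 0 < x := Real.sqrt_pos.mpr (by positivity)
  set ψ : ℝ := Real.arctan x with hψdef
  have hψ1 : 0 < ψ := by rw [hψdef, ← Real.arctan_zero]; exact Real.arctan_strictMono hx
  have hψ2 : ψ < Real.pi / 2 := Real.arctan_lt_pi_div_two x
  have hφ2' : φ < Real.pi / 2 := by linarith
  -- positivity of both sides
  have hposside : ∀ θ : ℝ, 0 < θ → θ < Real.pi / 2 →
      0 < (Real.sin (2 * (Real.pi / 2 - θ)))⁻¹ * (Real.cos θ) ^ (-(2 * (N : ℝ) + 3 / 2)) := by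
    intro θ h1 h2
    have hc : 0 < Real.cos θ := Real.cos_pos_of_mem_Ioo ⟨by linarith, h2⟩
    have hs : 0 < Real.sin (2 * (Real.pi / 2 - θ)) := by
      rw [show 2 * (Real.pi / 2 - θ) = Real.pi - 2 * θ by ring, Real.sin_pi_sub]
      exact Real.sin_pos_of_pos_of_lt_pi (by linarith) (by linarith)
    exact mul_pos (inv_pos.mpr hs) (Real.rpow_pos_of_pos hc _)
  apply le_of_pow_le_pow_left₀ two_ne_zero (hposside φ hφ₁ hφ2').le
  rw [fsq N hψ1 hψ2, fsq N hφ₁ hφ2']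
  have htψ : Real.tan ψ ^ 2 = 2 / (4 * (N:ℝ) + 5) := by
    rw [hψdef, Real.tan_arctan, hxdef, Real.sq_sqrt (by positivity)]
  have htφ : 0 < Real.tan φ := Real.tan_pos_of_pos_of_lt_pi_div_two hφ₁ hφ2'
  have hu' : (2:ℝ) / (4 * (N:ℝ) + 5) = 1 / ((2*(N:ℝ)+7/2) - 1) := by
    rw [show (2*(N:ℝ)+7/2) - 1 = 2*(N:ℝ)+5/2 by ring,
      div_eq_div_iff (by positivity) (by positivity)]
    ring
  have hkey := key_ineq (c := 2*(N:ℝ)+7/2) (u := Real.tan φ ^ 2)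
    (by have := Nat.cast_nonneg (α := ℝ) N; linarith) (by positivity)
  rw [htψ, hu']
  calc (1 + 1/((2*(N:ℝ)+7/2) - 1)) ^ (2*(N:ℝ)+7/2) / (4 * (1/((2*(N:ℝ)+7/2) - 1)))
      = ((1 + 1/((2*(N:ℝ)+7/2) - 1)) ^ (2*(N:ℝ)+7/2) / (1/((2*(N:ℝ)+7/2) - 1))) / 4 := by
        ring
    _ ≤ ((1 + Real.tan φ ^ 2) ^ (2*(N:ℝ)+7/2) / (Real.tan φ ^ 2)) / 4 := by linarith
    _ = (1 + Real.tan φ ^ 2) ^ (2*(N:ℝ)+7/2) / (4 * Real.tan φ ^ 2) := by ring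
end
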